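/- arXiv:2411.11793 — 5 statements merged into one kernel-verified Lean document; each statement's English description precedes it below -/
import Mathlib

section
/- If each strategy set S_i ⊆ ℝ_+^T is nonempty and compact, then the FL game Γ_FL possesses at least one Nash equilibrium, i.e., there exists s* ∈ ∏_{i=1}^m S_i such that P_i(s*_i, s*_{−i}) ≥ P_i(x_i, s*_{−i}) for every i ∈ [m] and every x_i ∈ S_i. -/
open Finset

/-- Payoff of client `i` in the FL game `Γ_FL`. -/
noncomputable def payFL (m T : ℕ) (lam : ℝ) (ρ α : Fin m → ℝ)
    (s : Fin m → Fin T → ℝ) (i : Fin m) : ℝ :=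
  ∑ t, (lam * (∑ j, ρ j * s j t) * s i t - α i * (s i t) ^ 2)

/-- Weighted potential of the FL game. -/
noncomputable def potFL (m T : ℕ) (lam : ℝ) (ρ α : Fin m → ℝ)
    (s : Fin m → Fin T → ℝ) : ℝ :=
  ∑ t, ((lam / 2) * (∑ j, ρ j * s j t) ^ 2
      + ∑ j, ρ j * (lam * ρ j / 2 - α j) * (s j t) ^ 2)

lemma potFL_key (m T : ℕ) (lam : ℝ) (ρ α : Fin m → ℝ)
    (s : Fin m → Fin T → ℝ) (i : Fin m) (x : Fin T → ℝ) :
    potFL m T lam ρ α (Function.update s i x) - potFL m T lam ρ α s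
      = ρ i * (payFL m T lam ρ α (Function.update s i x) i
          - payFL m T lam ρ α s i) := by
  unfold potFL payFL
  rw [← Finset.sum_sub_distrib, ← Finset.sum_sub_distrib, Finset.mul_sum]
  refine Finset.sum_congr rfl fun t _ => ?_
  have hsum : ∀ f : Fin m → Fin T → ℝ, ∀ g : Fin m → ℝ,
      ∑ j, g j = g i + ∑ j ∈ Finset.univ.erase i, g j := by
    intro f g
    rw [Finset.add_sum_erase _ _ (Finset.mem_univ i)]
  have h1 : (∑ j, ρ j * Function.update s i x j t)
      = ρ i * x t + ∑ j ∈ Finset.univ.erase i, ρ j * s j t := by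
    rw [hsum s (fun j => ρ j * Function.update s i x j t),
      Function.update_self]
    congr 1
    refine Finset.sum_congr rfl fun j hj => ?_
    rw [Function.update_of_ne (Finset.ne_of_mem_erase hj)]
  have h2 : (∑ j, ρ j * s j t)
      = ρ i * s i t + ∑ j ∈ Finset.univ.erase i, ρ j * s j t :=
    hsum s _
  have h3 : (∑ j, ρ j * (lam * ρ j / 2 - α j) * (Function.update s i x j t) ^ 2)
      - (∑ j, ρ j * (lam * ρ j / 2 - α j) * (s j t) ^ 2)
      = ρ i * (lam * ρ i / 2 - α i) * ((x t) ^ 2 - (s i t) ^ 2) := by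
    rw [hsum s (fun j => ρ j * (lam * ρ j / 2 - α j) * (Function.update s i x j t) ^ 2),
      hsum s (fun j => ρ j * (lam * ρ j / 2 - α j) * (s j t) ^ 2),
      Function.update_self]
    have : ∑ j ∈ Finset.univ.erase i, ρ j * (lam * ρ j / 2 - α j) * (Function.update s i x j t) ^ 2
        = ∑ j ∈ Finset.univ.erase i, ρ j * (lam * ρ j / 2 - α j) * (s j t) ^ 2 := by
      refine Finset.sum_congr rfl fun j hj => ?_
      rw [Function.update_of_ne (Finset.ne_of_mem_erase hj)]
    rw [this]; ring
  have hupd : Function.update s i x i t = x t := by rw [Function.update_self]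
  rw [h1, h2, hupd]
  have := h3
  -- combine everything; set R := ∑ erase
  set R := ∑ j ∈ Finset.univ.erase i, ρ j * s j t with hR
  linear_combination this

/-- If each strategy set `S i ⊆ ℝ₊^T` is nonempty and compact,
then the FL game `Γ_FL` possesses at least one Nash equilibrium. -/
theorem FL_exists_NE
    (m T : ℕ) (hm : 1 ≤ m) (hT : 1 ≤ T)
    (ρ α : Fin m → ℝ) (hρ : ∀ i, 0 < ρ i) (hρsum : ∑ i, ρ i = 1)
    (hα : ∀ i, 0 < α i) (lam : ℝ) (hlam : 0 < lam)
    (S : Fin m → Set (Fin T → ℝ))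
    (hSsub : ∀ i, S i ⊆ {f | ∀ t, 0 ≤ f t})
    (hSne : ∀ i, (S i).Nonempty)
    (hScpt : ∀ i, IsCompact (S i)) :
    ∃ s : Fin m → Fin T → ℝ, (∀ i, s i ∈ S i) ∧
      ∀ i : Fin m, ∀ x ∈ S i,
        payFL m T lam ρ α (Function.update s i x) i ≤ payFL m T lam ρ α s i := by
  have hKcpt : IsCompact (Set.univ.pi S) := isCompact_univ_pi hScpt
  have hKne : (Set.univ.pi S).Nonempty :=
    ⟨fun i => (hSne i).choose, fun i _ => (hSne i).choose_spec⟩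
  have hcont : Continuous (fun s : Fin m → Fin T → ℝ => potFL m T lam ρ α s) := by
    unfold potFL
    refine continuous_finset_sum _ fun t _ => ?_
    refine Continuous.add ?_ ?_
    · exact continuous_const.mul
        ((continuous_finset_sum _ fun j _ => continuous_const.mul
          ((continuous_apply t).comp (continuous_apply j))).pow 2)
    · exact continuous_finset_sum _ fun j _ => continuous_const.mul
        ((((continuous_apply t).comp (continuous_apply j))).pow 2)
  obtain ⟨s, hsK, hmax⟩ := hKcpt.exists_isMaxOn hKne hcont.continuousOn
  refine ⟨s, fun i => hsK i (Set.mem_univ i), fun i x hx => ?_⟩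
  have hupd : Function.update s i x ∈ Set.univ.pi S := by
    intro j _
    rcases eq_or_ne j i with rfl | hne
    · simpa using hx
    · rw [Function.update_of_ne hne]; exact hsK j (Set.mem_univ j)
  have hle : potFL m T lam ρ α (Function.update s i x) ≤ potFL m T lam ρ α s :=
    hmax hupd
  have hkey := potFL_key m T lam ρ α s i x
  nlinarith [hρ i]
end

section
/- Suppose λ = λ* and c_1 ≥ c_2. Then the homogeneous FL game Γ_FL^h has a unique Nash equilibrium. -/
open Finset

/-- Payoff of client `i` in the homogeneous FL game `Γ_FL^h`. -/
noncomputable def payH (m : ℕ) (lam : ℝ) (α : Fin m → ℝ) (s : Fin m → ℝ) (i : Fin m) : ℝ :=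
  lam / (m : ℝ) * (∑ j, s j) * s i - α i * (s i) ^ 2

/-- Nash equilibrium of the homogeneous FL game `Γ_FL^h`. -/
def isNE (m : ℕ) (lam : ℝ) (α q Q : Fin m → ℝ) (s : Fin m → ℝ) : Prop :=
  (∀ i, s i ∈ Set.Icc (q i) (Q i)) ∧
  ∀ i : Fin m, ∀ x ∈ Set.Icc (q i) (Q i),
    payH m lam α (Function.update s i x) i ≤ payH m lam α s i

lemma clamp_lip {q Q x y : ℝ} (h : x ≤ y) :
    max q (min Q y) - max q (min Q x) ≤ y - x := by
  simp only [max_def, min_def]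
  split_ifs <;> linarith

lemma clamp_eq_ends {q Q x y : ℝ} (hxy : x < y)
    (h : max q (min Q y) - max q (min Q x) = y - x) : q ≤ x ∧ y ≤ Q := by
  constructor <;> by_contra hc <;> push_neg at hc <;>
    simp only [max_def, min_def] at h <;> split_ifs at h <;> linarith

lemma sum_update_eq (m : ℕ) (s : Fin m → ℝ) (i : Fin m) (x : ℝ) :
    ∑ j, Function.update s i x j = ∑ j, s j - s i + x := by
  rw [Finset.sum_update_of_mem (Finset.mem_univ i),
    Finset.sum_sdiff_eq_sub (Finset.subset_univ {i}), Finset.sum_singleton]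
  ring


section single
variable {M lam ai qi Qi si T x : ℝ}

lemma forward_single (hM : 0 < M) (hlam : 0 < lam) (hai : 0 < ai) (hqQ : qi ≤ Qi)
    (hd : lam < M * ai) (hmem1 : qi ≤ si) (hmem2 : si ≤ Qi)
    (hI' : lam * (T - si + max qi (min Qi (lam * T / (2 * M * ai - lam)))) *
        max qi (min Qi (lam * T / (2 * M * ai - lam))) -
        M * ai * (max qi (min Qi (lam * T / (2 * M * ai - lam)))) ^ 2 ≤
        lam * T * si - M * ai * si ^ 2) :
    si = max qi (min Qi (lam * T / (2 * M * ai - lam))) := by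
  have hdi : 0 < 2 * M * ai - lam := by nlinarith [mul_pos hM hai]
  set a := lam * T / (2 * M * ai - lam) with ha
  rcases le_or_gt qi a with h1 | h1
  · rcases le_or_gt a Qi with h2 | h2
    · have hca : max qi (min Qi a) = a := by rw [min_eq_right h2, max_eq_right h1]
      rw [hca] at hI' ⊢
      have had : a * (2 * M * ai - lam) = lam * T := div_mul_cancel₀ _ (ne_of_gt hdi)
      have hz : (si - a) * (a * (2 * M * ai - lam) - lam * T) = 0 := by rw [had]; ring
      have h0 : M * ai * (si - a) ^ 2 ≤ 0 := by nlinarith [hI', hz]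
      have h2' : (si - a) ^ 2 ≤ 0 := by
        have := mul_pos hM hai
        nlinarith
      have : si - a = 0 := by
        have := sq_nonneg (si - a)
        nlinarith
      linarith
    · have hca : max qi (min Qi a) = Qi := by rw [min_eq_left h2.le, max_eq_right hqQ]
      rw [hca] at hI' ⊢
      have had : Qi * (2 * M * ai - lam) < lam * T := (lt_div_iff₀ hdi).mp h2
      by_contra hne
      have hlt : si < Qi := lt_of_le_of_ne hmem2 hne
      nlinarith [mul_pos (sub_pos.mpr hlt) (sub_pos.mpr had),
        mul_pos (mul_pos hM hai) (pow_pos (sub_pos.mpr hlt) 2)]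
  · have haQ : a ≤ Qi := le_trans h1.le hqQ
    have hca : max qi (min Qi a) = qi := by rw [min_eq_right haQ, max_eq_left h1.le]
    rw [hca] at hI' ⊢
    have had : lam * T < qi * (2 * M * ai - lam) := (div_lt_iff₀ hdi).mp h1
    by_contra hne
    have hlt : qi < si := lt_of_le_of_ne hmem1 (Ne.symm hne)
    nlinarith [mul_pos (sub_pos.mpr hlt) (sub_pos.mpr had),
      mul_pos (mul_pos hM hai) (pow_pos (sub_pos.mpr hlt) 2)]

lemma reverse_single (hM : 0 < M) (hlam : 0 < lam) (hai : 0 < ai) (hqQ : qi ≤ Qi)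
    (hd : lam < M * ai)
    (hsi : si = max qi (min Qi (lam * T / (2 * M * ai - lam))))
    (hx1 : qi ≤ x) (hx2 : x ≤ Qi) :
    lam * (T - si + x) * x - M * ai * x ^ 2 ≤ lam * T * si - M * ai * si ^ 2 := by
  have hdi : 0 < 2 * M * ai - lam := by nlinarith [mul_pos hM hai]
  set a := lam * T / (2 * M * ai - lam) with ha
  rcases le_or_gt qi a with h1 | h1
  · rcases le_or_gt a Qi with h2 | h2
    · have hsa : si = a := by rw [hsi, min_eq_right h2, max_eq_right h1]
      have had : a * (2 * M * ai - lam) = lam * T := div_mul_cancel₀ _ (ne_of_gt hdi)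
      have hz : (si - x) * (a * (2 * M * ai - lam) - lam * T) = 0 := by rw [had]; ring
      rw [hsa] at hz ⊢
      nlinarith [hz, mul_nonneg (sub_nonneg.mpr hd.le) (sq_nonneg (a - x))]
    · have hsa : si = Qi := by rw [hsi, min_eq_left h2.le, max_eq_right hqQ]
      have had : Qi * (2 * M * ai - lam) ≤ lam * T := ((lt_div_iff₀ hdi).mp h2).le
      rw [hsa]
      nlinarith [mul_nonneg (sub_nonneg.mpr hx2) (sub_nonneg.mpr had),
        mul_nonneg (sub_nonneg.mpr hd.le) (sq_nonneg (Qi - x))]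
  · have haQ : a ≤ Qi := le_trans h1.le hqQ
    have hsa : si = qi := by rw [hsi, min_eq_right haQ, max_eq_left h1.le]
    have had : lam * T ≤ qi * (2 * M * ai - lam) := ((div_lt_iff₀ hdi).mp h1).le
    rw [hsa]
    nlinarith [mul_nonneg (sub_nonneg.mpr hx1) (sub_nonneg.mpr had),
      mul_nonneg (sub_nonneg.mpr hd.le) (sq_nonneg (qi - x))]

end single

lemma pay_scale (M lam ai T s x : ℝ) (hM : 0 < M) :
    (lam / M * (T - s + x) * x - ai * x ^ 2 ≤ lam / M * T * s - ai * s ^ 2) ↔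
    (lam * (T - s + x) * x - M * ai * x ^ 2 ≤ lam * T * s - M * ai * s ^ 2) := by
  have e1 : lam / M * (T - s + x) * x - ai * x ^ 2 =
      (lam * (T - s + x) * x - M * ai * x ^ 2) / M := by field_simp
  have e2 : lam / M * T * s - ai * s ^ 2 = (lam * T * s - M * ai * s ^ 2) / M := by
    field_simp
  rw [e1, e2, div_le_div_iff_of_pos_right hM]

lemma NE_char (m : ℕ) (lam : ℝ) (α q Q : Fin m → ℝ) (s : Fin m → ℝ)
    (hm : 1 ≤ m) (hlam : 0 < lam) (hα : ∀ i, 0 < α i) (hqQ : ∀ i, q i ≤ Q i)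
    (hd : ∀ i, lam < (m : ℝ) * α i) :
    isNE m lam α q Q s ↔
      ∀ i, s i = max (q i) (min (Q i) (lam * (∑ j, s j) / (2 * (m : ℝ) * α i - lam))) := by
  have hM : (0:ℝ) < (m:ℝ) := by exact_mod_cast hm
  constructor
  · rintro ⟨hmem, hbr⟩ i
    set c := max (q i) (min (Q i) (lam * (∑ j, s j) / (2 * (m:ℝ) * α i - lam))) with hc
    have hcmem : c ∈ Set.Icc (q i) (Q i) :=
      ⟨le_max_left _ _, max_le (hqQ i) (min_le_left _ _)⟩
    have hI := hbr i c hcmem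
    simp only [payH, Function.update_self] at hI
    rw [sum_update_eq] at hI
    rw [pay_scale _ _ _ _ _ _ hM] at hI
    exact forward_single hM hlam (hα i) (hqQ i) (hd i) (hmem i).1 (hmem i).2 hI
  · intro h
    have hmem : ∀ i, s i ∈ Set.Icc (q i) (Q i) := fun i => by
      rw [h i]; exact ⟨le_max_left _ _, max_le (hqQ i) (min_le_left _ _)⟩
    refine ⟨hmem, fun i x hx => ?_⟩
    simp only [payH, Function.update_self]
    rw [sum_update_eq, pay_scale _ _ _ _ _ _ hM]
    exact reverse_single hM hlam (hα i) (hqQ i) (hd i) (h i) hx.1 hx.2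

/-- If `λ = λ*` and `c₁ ≥ c₂`, the homogeneous FL game has a
unique Nash equilibrium. -/
theorem homFL_unique_NE_at_jump
    (m : ℕ) (hm : 1 ≤ m) (α q Q : Fin m → ℝ)
    (hα : ∀ i, 0 < α i) (hq : ∀ i, 0 < q i) (hqQ : ∀ i, q i ≤ Q i)
    (αmin : ℝ) (hαmin : IsLeast (Set.range α) αmin)
    (lamstar : ℝ) (hlamstar : lamstar ∈ Set.Ioo 0 ((m : ℝ) * αmin))
    (hlseq : ∑ i, lamstar / (2 * (m : ℝ) * α i - lamstar) = 1)
    (c₁ c₂ : ℝ)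
    (hc₁ : IsGreatest (Set.range fun i => 2 * α i * q i / lamstar - q i / (m : ℝ)) c₁)
    (hc₂ : IsLeast (Set.range fun i => 2 * α i * Q i / lamstar - Q i / (m : ℝ)) c₂)
    (hc : c₁ ≥ c₂) :
    ∃! s : Fin m → ℝ, isNE m lamstar α q Q s := by
  obtain ⟨hlam0, hlamlt⟩ := hlamstar
  have hM : (0:ℝ) < (m:ℝ) := by exact_mod_cast hm
  have hαmin_le : ∀ i, αmin ≤ α i := fun i => hαmin.2 ⟨i, rfl⟩
  have hd : ∀ i, lamstar < (m:ℝ) * α i := fun i =>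
    lt_of_lt_of_le hlamlt (mul_le_mul_of_nonneg_left (hαmin_le i) hM.le)
  have hdi : ∀ i, 0 < 2 * (m:ℝ) * α i - lamstar := fun i => by
    nlinarith [hd i, mul_pos hM (hα i)]
  set b : Fin m → ℝ → ℝ :=
    fun i t => max (q i) (min (Q i) (lamstar * t / (2 * (m:ℝ) * α i - lamstar))) with hb
  have char : ∀ s : Fin m → ℝ, isNE m lamstar α q Q s ↔ ∀ i, s i = b i (∑ j, s j) :=
    fun s => NE_char m lamstar α q Q s hm hlam0 hα hqQ hd
  set F : ℝ → ℝ := fun t => ∑ i, b i t with hF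
  -- existence of a fixed point of F
  have hcont : Continuous F := by
    apply continuous_finset_sum
    intro i _
    exact continuous_const.max (continuous_const.min
      ((continuous_const.mul continuous_id).div_const _))
  have hAB : ∑ i, q i ≤ ∑ i, Q i := Finset.sum_le_sum fun i _ => hqQ i
  have hFA : ∑ i, q i ≤ F (∑ i, q i) := Finset.sum_le_sum fun i _ => le_max_left _ _
  have hFB : F (∑ i, Q i) ≤ ∑ i, Q i :=
    Finset.sum_le_sum fun i _ => max_le (hqQ i) (min_le_left _ _)
  obtain ⟨t, -, ht⟩ : ∃ u ∈ Set.Icc (∑ i, q i) (∑ i, Q i), F u - u = 0 := by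
    have him := intermediate_value_Icc' hAB ((hcont.sub continuous_id).continuousOn)
    have h0 : (0:ℝ) ∈ Set.Icc (F (∑ i, Q i) - ∑ i, Q i) (F (∑ i, q i) - ∑ i, q i) :=
      ⟨by linarith, by linarith⟩
    obtain ⟨u, hu1, hu2⟩ := him h0
    exact ⟨u, hu1, hu2⟩
  have hFt : F t = t := by linarith
  -- uniqueness of the fixed point
  have fixaux : ∀ T T' : ℝ, T < T' → F T = T → F T' = T' → False := by
    intro T T' hlt h1 h2
    have hsum_a : ∀ u : ℝ, ∑ i, lamstar * u / (2 * (m:ℝ) * α i - lamstar) = u := by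
      intro u
      rw [Finset.sum_congr rfl (fun i _ =>
        show lamstar * u / (2 * (m:ℝ) * α i - lamstar)
          = u * (lamstar / (2 * (m:ℝ) * α i - lamstar)) by ring),
        ← Finset.mul_sum, hlseq, mul_one]
    have haa : ∀ i : Fin m, lamstar * T / (2 * (m:ℝ) * α i - lamstar)
        < lamstar * T' / (2 * (m:ℝ) * α i - lamstar) := fun i =>
      div_lt_div_of_pos_right (by nlinarith [hlam0]) (hdi i)
    have hle : ∀ i ∈ Finset.univ, b i T' - b i T ≤
        lamstar * T' / (2 * (m:ℝ) * α i - lamstar)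
          - lamstar * T / (2 * (m:ℝ) * α i - lamstar) :=
      fun i _ => clamp_lip (haa i).le
    have hsums : ∑ i, (b i T' - b i T) = ∑ i, (lamstar * T' / (2 * (m:ℝ) * α i - lamstar)
        - lamstar * T / (2 * (m:ℝ) * α i - lamstar)) := by
      rw [Finset.sum_sub_distrib, Finset.sum_sub_distrib, hsum_a, hsum_a]
      have e1 : ∑ i, b i T' = T' := h2
      have e2 : ∑ i, b i T = T := h1
      rw [e1, e2]
    have heq := (Finset.sum_eq_sum_iff_of_le hle).mp hsums
    have hends : ∀ i : Fin m, q i ≤ lamstar * T / (2 * (m:ℝ) * α i - lamstar) ∧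
        lamstar * T' / (2 * (m:ℝ) * α i - lamstar) ≤ Q i := fun i =>
      clamp_eq_ends (haa i) (by
        have := heq i (Finset.mem_univ i)
        simpa [hb] using this)
    obtain ⟨i1, hi1⟩ := hc₁.1
    obtain ⟨i2, hi2⟩ := hc₂.1
    have hq1 : q i1 * (2 * (m:ℝ) * α i1 - lamstar) ≤ lamstar * T :=
      (le_div_iff₀ (hdi i1)).mp (hends i1).1
    have hq2 : lamstar * T' ≤ Q i2 * (2 * (m:ℝ) * α i2 - lamstar) :=
      (div_le_iff₀ (hdi i2)).mp (hends i2).2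
    have hb1 : c₁ ≤ T / (m:ℝ) := by
      rw [← hi1]
      show 2 * α i1 * q i1 / lamstar - q i1 / (m:ℝ) ≤ T / (m:ℝ)
      rw [div_sub_div _ _ (ne_of_gt hlam0) (ne_of_gt hM),
        div_le_div_iff₀ (mul_pos hlam0 hM) hM]
      nlinarith [mul_le_mul_of_nonneg_left hq1 hM.le]
    have hb2 : T' / (m:ℝ) ≤ c₂ := by
      rw [← hi2]
      show T' / (m:ℝ) ≤ 2 * α i2 * Q i2 / lamstar - Q i2 / (m:ℝ)
      rw [div_sub_div _ _ (ne_of_gt hlam0) (ne_of_gt hM),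
        div_le_div_iff₀ hM (mul_pos hlam0 hM)]
      nlinarith [mul_le_mul_of_nonneg_left hq2 hM.le]
    have : T' / (m:ℝ) ≤ T / (m:ℝ) := le_trans hb2 (le_trans hc hb1)
    have : T' ≤ T := (div_le_div_iff_of_pos_right hM).mp this
    linarith
  -- construct the NE
  refine ⟨fun i => b i t, ?_, ?_⟩
  · refine (char _).mpr fun i => ?_
    have hsum : ∑ j, b j t = t := hFt
    rw [hsum]
  · intro s' h'
    have h'c := (char s').mp h'
    have hFT' : F (∑ j, s' j) = ∑ j, s' j :=
      Finset.sum_congr rfl (fun i _ => (h'c i).symm)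
    have hTt : (∑ j, s' j) = t := by
      rcases lt_trichotomy (∑ j, s' j) t with h | h | h
      · exact absurd (fixaux _ _ h hFT' hFt) not_false
      · exact h
      · exact absurd (fixaux _ _ h hFt hFT') not_false
    funext i
    rw [h'c i, hTt]
end

section
/- If λ ∈ (λ_1, λ*), then the unique Nash equilibrium s* of the homogeneous FL game Γ_FL^h satisfies s̄* < c_1, where s̄* = (1/m) Σ_{i=1}^m s*_i. -/
open Finset

/-!
For `λ < m α_i` client `i`'s payoff is a strictly concave quadratic in its own effort, so at an
equilibrium `s_i` is the clamp to `[q_i, Q_i]` of the unconstrained best response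
`v_i = λ (S - s_i) / (2 (m α_i - λ))`, where `S = Σ s_j`. The game has the exact potential
`Φ(s) = λ/(2m) (Σ s_j)² + Σ (λ/(2m) - α_j) s_j²`, and a maximiser of `Φ` on the compact box of
strategies is an equilibrium. Clamping is 1-Lipschitz, so two equilibria satisfy
`|s_i - t_i| ≤ w_i(λ) Σ |s_j - t_j|` with `w_i(μ) = μ / (2 m α_i - μ)`; since `w_i` is increasing,
`Σ w_i(λ) < Σ w_i(λ*) = 1`, which forces `s = t`.

For `λ > λ₁` not every client can sit at its lower bound: some `q_j < v_j`. If `s̄ ≥ c₁`, then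
`q_i ≤ w_i(λ*) S` for all `i`, while `s_i ≤ v_i` means `s_i ≤ w_i(λ) S < w_i(λ*) S`; summing gives
`S < Σ w_i(λ*) S = S`.
-/

lemma eq_max_min_of_isMinOn_sq_sub {q Q v s : ℝ} (hs : s ∈ Set.Icc q Q)
    (h : IsMinOn (fun x => (x - v) ^ 2) (Set.Icc q Q) s) : s = max q (min Q v) := by
  have hqQ : q ≤ Q := hs.1.trans hs.2
  have hmin := isMinOn_iff.mp h
  rcases le_or_gt v q with hvq | hqv
  · have := hmin q ⟨le_rfl, hqQ⟩
    rw [max_eq_left ((min_le_right Q v).trans hvq)]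
    nlinarith [hs.1]
  rcases le_or_gt v Q with hvQ | hQv
  · have := hmin v ⟨hqv.le, hvQ⟩
    rw [min_eq_right hvQ, max_eq_right hqv.le]
    nlinarith
  · have := hmin Q ⟨hqQ, le_rfl⟩
    rw [min_eq_left hQv.le, max_eq_right hqQ]
    nlinarith [hs.2]

lemma le_div_sub_mul_of_le_mul_sub_div {c D x y : ℝ} (hD : 0 < D) (hcD : 2 * c < D)
    (h : x ≤ c * (y - x) / (D - 2 * c)) : x ≤ c / (D - c) * y := by
  rw [le_div_iff₀ (by linarith)] at h
  rw [div_mul_eq_mul_div, le_div_iff₀ (by linarith)]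
  linarith

lemma div_sub_lt_div_sub {a b d : ℝ} (hd : 0 < d) (hab : a < b) (hbd : b < d) :
    a / (d - a) < b / (d - b) := by
  rw [div_lt_div_iff₀ (by linarith) (by linarith)]
  nlinarith [mul_pos (sub_pos.2 hab) hd]

lemma sum_update_eq_add_sum_erase {ι α M : Type*} [Fintype ι] [DecidableEq ι] [AddCommMonoid M]
    (g : ι → α → M) (s : ι → α) (i : ι) (x : α) :
    ∑ j, g j (Function.update s i x j) = g i x + ∑ j ∈ univ.erase i, g j (s j) := by
  rw [← add_sum_erase _ _ (mem_univ i), Function.update_self]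
  congr 1
  exact sum_congr rfl fun j hj => by rw [Function.update_of_ne (ne_of_mem_erase hj)]

section Game

variable {m : ℕ} {lam : ℝ} {α q Q : Fin m → ℝ}

noncomputable def potentialH (m : ℕ) (lam : ℝ) (α s : Fin m → ℝ) : ℝ :=
  lam / (2 * m) * (∑ j, s j) ^ 2 + ∑ j, (lam / (2 * m) - α j) * s j ^ 2

noncomputable def unconstrainedBestResponse (m : ℕ) (lam : ℝ) (α s : Fin m → ℝ) (i : Fin m) : ℝ :=
  lam * (∑ j ∈ univ.erase i, s j) / (2 * m * α i - 2 * lam)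

lemma payH_update (s : Fin m → ℝ) (i : Fin m) (y : ℝ) :
    payH m lam α (Function.update s i y) i
      = lam / m * (y + ∑ j ∈ univ.erase i, s j) * y - α i * y ^ 2 := by
  have := sum_update_eq_add_sum_erase (fun _ z => z) s i y
  simp only [payH, this, Function.update_self]

lemma payH_update_sub_payH (s : Fin m → ℝ) (i : Fin m) (x : ℝ) :
    payH m lam α (Function.update s i x) i - payH m lam α s i
      = potentialH m lam α (Function.update s i x) - potentialH m lam α s := by
  have hpot (y : ℝ) : potentialH m lam α (Function.update s i y)
      = lam / (2 * m) * (y + ∑ j ∈ univ.erase i, s j) ^ 2 + ((lam / (2 * m) - α i) * y ^ 2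
        + ∑ j ∈ univ.erase i, (lam / (2 * m) - α j) * s j ^ 2) := by
    have h1 := sum_update_eq_add_sum_erase (fun _ z => z) s i y
    have h2 := sum_update_eq_add_sum_erase (fun j z => (lam / (2 * m) - α j) * z ^ 2) s i y
    simp only [potentialH, h1, h2]
  have hpay := payH_update (lam := lam) (α := α) s i (s i)
  have hpot' := hpot (s i)
  rw [Function.update_eq_self] at hpay hpot'
  rw [payH_update, hpay, hpot, hpot']
  ring

lemma exists_isNE (hqQ : ∀ i, q i ≤ Q i) : ∃ s, isNE m lam α q Q s := by
  have hcont : Continuous (potentialH m lam α) := by unfold potentialH; fun_prop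
  obtain ⟨s, hs, hmax⟩ := (isCompact_univ_pi fun i => isCompact_Icc).exists_isMaxOn
    ⟨q, fun i _ => ⟨le_rfl, hqQ i⟩⟩ hcont.continuousOn
  refine ⟨s, fun i => hs i trivial, fun i x hx => ?_⟩
  have : potentialH m lam α (Function.update s i x) ≤ potentialH m lam α s :=
    hmax ((Set.update_mem_pi_iff_of_mem hs).2 fun _ => hx)
  linarith [payH_update_sub_payH (lam := lam) (α := α) s i x]

lemma isNE.eq_max_min {s : Fin m → ℝ} (hs : isNE m lam α q Q s) {i : Fin m}
    (hi : lam < m * α i) :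
    s i = max (q i) (min (Q i) (unconstrainedBestResponse m lam α s i)) := by
  set v := unconstrainedBestResponse m lam α s i
  have hm : (0 : ℝ) < m := Nat.cast_pos.2 i.pos
  have ha : 0 < α i - lam / m := by rw [sub_pos, div_lt_iff₀ hm]; linarith
  have hpay (y : ℝ) : payH m lam α (Function.update s i y) i
      = (α i - lam / m) * v ^ 2 - (α i - lam / m) * (y - v) ^ 2 := by
    have : m * α i - lam ≠ 0 := by linarith
    have : 2 * m * α i - 2 * lam ≠ 0 := by linarith
    rw [payH_update]
    simp only [v, unconstrainedBestResponse]
    field_simp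
    ring
  have hself := hpay (s i)
  rw [Function.update_eq_self] at hself
  refine eq_max_min_of_isMinOn_sq_sub (hs.1 i) (isMinOn_iff.2 fun x hx => ?_)
  have := hs.2 i x hx
  rw [hpay, hself] at this
  nlinarith

lemma isNE.le_max {s : Fin m → ℝ} (hs : isNE m lam α q Q s) {i : Fin m} (hi : lam < m * α i) :
    s i ≤ max (q i) (unconstrainedBestResponse m lam α s i) :=
  (hs.eq_max_min hi).trans_le (max_le_max le_rfl (min_le_right _ _))

lemma isNE.abs_sub_le {s t : Fin m → ℝ} (hs : isNE m lam α q Q s) (ht : isNE m lam α q Q t)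
    (hlam : 0 ≤ lam) {i : Fin m} (hi : lam < m * α i) :
    |s i - t i| ≤ lam / (2 * m * α i - lam) * ∑ j, |s j - t j| := by
  have hD : 0 < 2 * m * α i - 2 * lam := by linarith
  refine le_div_sub_mul_of_le_mul_sub_div (by linarith) (by linarith) ?_
  calc |s i - t i|
      ≤ |unconstrainedBestResponse m lam α s i - unconstrainedBestResponse m lam α t i| := by
        rw [hs.eq_max_min hi, ht.eq_max_min hi]
        -- `Set.projIcc a b h v` is `max a (min b v)` by definition
        exact Set.abs_projIcc_sub_projIcc ((hs.1 i).1.trans (hs.1 i).2)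
    _ = lam * |∑ j ∈ univ.erase i, (s j - t j)| / (2 * m * α i - 2 * lam) := by
        rw [unconstrainedBestResponse, unconstrainedBestResponse, ← sub_div, ← mul_sub,
          ← sum_sub_distrib, abs_div, abs_mul, abs_of_nonneg hlam, abs_of_pos hD]
    _ ≤ lam * (∑ j, |s j - t j| - |s i - t i|) / (2 * m * α i - 2 * lam) := by
        rw [← sum_erase_eq_sub (mem_univ i)]
        gcongr
        exact abs_sum_le_sum_abs _ _

lemma isNE.eq {s t : Fin m → ℝ} (hs : isNE m lam α q Q s) (ht : isNE m lam α q Q t)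
    (hlam : 0 ≤ lam) (hα : ∀ i, lam < m * α i)
    (hw : ∑ i, lam / (2 * m * α i - lam) < 1) : s = t := by
  set U := ∑ j, |s j - t j|
  have hU : U ≤ (∑ i, lam / (2 * m * α i - lam)) * U := by
    rw [sum_mul]
    exact sum_le_sum fun i _ => hs.abs_sub_le ht hlam (hα i)
  have hU0 : U = 0 := by nlinarith [sum_nonneg fun j (_ : j ∈ univ) => abs_nonneg (s j - t j)]
  funext i
  rw [← sub_eq_zero, ← abs_eq_zero]
  exact (sum_eq_zero_iff_of_nonneg fun j _ => abs_nonneg (s j - t j)).1 hU0 i (mem_univ i)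

lemma isNE.exists_lt_unconstrainedBestResponse {s : Fin m → ℝ} (hs : isNE m lam α q Q s)
    (hq : ∀ i, 0 < q i) (hα : ∀ i, lam < m * α i) {i : Fin m}
    (hact : 2 * (α i * q i / ((∑ j, q j) / m + q i / m)) < lam) :
    ∃ j, q j < unconstrainedBestResponse m lam α s j := by
  by_contra! h
  have hsq : s = q := funext fun j => by
    rw [hs.eq_max_min (hα j)]
    exact max_eq_left ((min_le_right _ _).trans (h j))
  have hQ : 0 < ∑ j, q j + q i := add_pos (sum_pos (fun j _ => hq j) ⟨i, mem_univ i⟩) (hq i)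
  have hidle := h i
  rw [hsq, unconstrainedBestResponse, div_le_iff₀ (by linarith [hα i]),
    sum_erase_eq_sub (mem_univ i)] at hidle
  have hact_eq : 2 * (α i * q i / ((∑ j, q j) / m + q i / m))
      = 2 * m * α i * q i / (∑ j, q j + q i) := by
    rw [← add_div, div_div_eq_mul_div]
    ring
  rw [hact_eq, div_lt_iff₀ hQ] at hact
  linarith

lemma le_div_sub_mul_sum_of_le_unconstrainedBestResponse {s : Fin m → ℝ} {i : Fin m}
    (hαi : 0 < α i) (hi : lam < m * α i) (h : s i ≤ unconstrainedBestResponse m lam α s i) :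
    s i ≤ lam / (2 * m * α i - lam) * ∑ j, s j := by
  have hm : (0 : ℝ) < m := Nat.cast_pos.2 i.pos
  refine le_div_sub_mul_of_le_mul_sub_div (by positivity) (by linarith) ?_
  rwa [unconstrainedBestResponse, sum_erase_eq_sub (mem_univ i)] at h

lemma isNE.sum_div_lt {s : Fin m → ℝ} (hs : isNE m lam α q Q s) (hq : ∀ i, 0 < q i)
    {lamstar c : ℝ} (hstar_pos : 0 < lamstar) (hlam : lam < lamstar)
    (hstar : ∀ i, lamstar < m * α i) (hw : ∑ i, lamstar / (2 * m * α i - lamstar) = 1)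
    (hc : ∀ i, 2 * α i * q i / lamstar - q i / m ≤ c)
    {j : Fin m} (hj : q j < unconstrainedBestResponse m lam α s j) :
    (∑ i, s i) / m < c := by
  set S := ∑ i, s i
  have hm : (0 : ℝ) < m := Nat.cast_pos.2 j.pos
  have hαpos (i : Fin m) : 0 < α i := pos_of_mul_pos_right (hstar_pos.trans (hstar i)) hm.le
  have hS : 0 < S := sum_pos (fun i _ => (hq i).trans_le (hs.1 i).1) ⟨j, mem_univ j⟩
  by_contra! hcS
  have hlow (i : Fin m) : q i ≤ lamstar / (2 * m * α i - lamstar) * S := by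
    have := (hc i).trans hcS
    rw [div_sub_div _ _ hstar_pos.ne' hm.ne', div_le_div_iff₀ (by positivity) hm] at this
    rw [div_mul_eq_mul_div, le_div_iff₀ (by linarith [hstar i])]
    nlinarith
  have hactive (i : Fin m) (h : s i ≤ unconstrainedBestResponse m lam α s i) :
      s i < lamstar / (2 * m * α i - lamstar) * S :=
    (le_div_sub_mul_sum_of_le_unconstrainedBestResponse (hαpos i) (hlam.trans (hstar i)) h).trans_lt
      (mul_lt_mul_of_pos_right
        (div_sub_lt_div_sub (by linarith [hstar i]) hlam (by linarith [hstar i])) hS)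
  have hle (i : Fin m) : s i ≤ lamstar / (2 * m * α i - lamstar) * S := by
    rcases le_max_iff.1 (hs.le_max (hlam.trans (hstar i))) with h | h
    · exact h.trans (hlow i)
    · exact (hactive i h).le
  have hlt := hactive j ((hs.le_max (hlam.trans (hstar j))).trans_eq (max_eq_right hj.le))
  have : S < S := calc
    S < ∑ i, lamstar / (2 * m * α i - lamstar) * S :=
      sum_lt_sum (fun i _ => hle i) ⟨j, mem_univ j, hlt⟩
    _ = S := by rw [← sum_mul, hw, one_mul]
  exact this.false

end Game

theorem homFL_NE_between_activation_and_jump_general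
    (m : ℕ) (α q Q : Fin m → ℝ)
    (hq : ∀ i, 0 < q i) (hqQ : ∀ i, q i ≤ Q i)
    (αmin : ℝ) (hαmin : IsLeast (Set.range α) αmin)
    (lamstar : ℝ) (hlamstar : lamstar ∈ Set.Ioo 0 ((m : ℝ) * αmin))
    (hlseq : ∑ i, lamstar / (2 * (m : ℝ) * α i - lamstar) = 1)
    (c₁ : ℝ)
    (hc₁ : IsGreatest (Set.range fun i => 2 * α i * q i / lamstar - q i / (m : ℝ)) c₁)
    (qbar : ℝ) (hqbar : qbar = (∑ i, q i) / (m : ℝ))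
    (lam₁ : ℝ)
    (hlam₁ : IsLeast (Set.range fun i => 2 * (α i * q i / (qbar + q i / (m : ℝ)))) lam₁)
    (lam : ℝ) (hlam : lam ∈ Set.Ioo lam₁ lamstar) :
    (∃! s : Fin m → ℝ, isNE m lam α q Q s) ∧
    ∀ s : Fin m → ℝ, isNE m lam α q Q s → (∑ i, s i) / (m : ℝ) < c₁ := by
  have hstar (i : Fin m) : lamstar < m * α i :=
    hlamstar.2.trans_le (mul_le_mul_of_nonneg_left (hαmin.2 ⟨i, rfl⟩) m.cast_nonneg)
  have hα (i : Fin m) : lam < m * α i := hlam.2.trans (hstar i)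
  obtain ⟨i₁, rfl⟩ := hlam₁.1
  subst hqbar
  have hlam_pos : 0 < lam := by
    have hm : (0 : ℝ) < m := Nat.cast_pos.2 i₁.pos
    have : 0 < α i₁ := pos_of_mul_pos_right (hlamstar.1.trans (hstar i₁)) hm.le
    have : 0 < ∑ i, q i := sum_pos (fun i _ => hq i) ⟨i₁, mem_univ i₁⟩
    have := hq i₁
    exact hlam.1.trans' (by positivity)
  have hw : ∑ i, lam / (2 * m * α i - lam) < 1 := hlseq ▸ sum_lt_sum_of_nonempty ⟨i₁, mem_univ i₁⟩
    fun i _ => div_sub_lt_div_sub (by linarith [hstar i, hlamstar.1]) hlam.2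
      (by linarith [hstar i, hlamstar.1])
  refine ⟨existsUnique_of_exists_of_unique (exists_isNE hqQ)
    fun s t hs ht => hs.eq ht hlam_pos.le hα hw, fun s hs => ?_⟩
  obtain ⟨j, hj⟩ := hs.exists_lt_unconstrainedBestResponse hq hα hlam.1
  exact hs.sum_div_lt hq hlamstar.1 hlam.2 hstar hlseq (fun i => hc₁.2 ⟨i, rfl⟩) hj

/-- If `λ ∈ (λ₁, λ*)`, the unique Nash equilibrium `s*` of
`Γ_FL^h` satisfies `s̄* < c₁`. -/
theorem homFL_NE_between_activation_and_jump
    (m : ℕ) (hm : 1 ≤ m) (α q Q : Fin m → ℝ)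
    (hα : ∀ i, 0 < α i) (hq : ∀ i, 0 < q i) (hqQ : ∀ i, q i ≤ Q i)
    (αmin : ℝ) (hαmin : IsLeast (Set.range α) αmin)
    (lamstar : ℝ) (hlamstar : lamstar ∈ Set.Ioo 0 ((m : ℝ) * αmin))
    (hlseq : ∑ i, lamstar / (2 * (m : ℝ) * α i - lamstar) = 1)
    (c₁ : ℝ)
    (hc₁ : IsGreatest (Set.range fun i => 2 * α i * q i / lamstar - q i / (m : ℝ)) c₁)
    (qbar : ℝ) (hqbar : qbar = (∑ i, q i) / (m : ℝ))
    (lam₁ : ℝ)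
    (hlam₁ : IsLeast (Set.range fun i => 2 * (α i * q i / (qbar + q i / (m : ℝ)))) lam₁)
    (lam : ℝ) (hlam : lam ∈ Set.Ioo lam₁ lamstar) :
    (∃! s : Fin m → ℝ, isNE m lam α q Q s) ∧
    ∀ s : Fin m → ℝ, isNE m lam α q Q s → (∑ i, s i) / (m : ℝ) < c₁ :=
  homFL_NE_between_activation_and_jump_general m α q Q hq hqQ αmin hαmin lamstar hlamstar hlseq c₁
    hc₁ qbar hqbar lam₁ hlam₁ lam hlam
end

section
/- If λ ∈ (λ_2, +∞), then the profile s* = (Q_1,…,Q_m) is a Nash equilibrium of the homogeneous FL game Γ_FL^h, and it is the unique Nash equilibrium of Γ_FL^h. -/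
open Finset

lemma sum_update_fin {m : ℕ} (s : Fin m → ℝ) (i : Fin m) (x : ℝ) :
    ∑ j, Function.update s i x j = (∑ j, s j) - s i + x := by
  classical
  rw [Finset.sum_update_of_mem (Finset.mem_univ i)]
  rw [show (Finset.univ : Finset (Fin m)) \ {i} = Finset.univ.erase i by
        rw [Finset.erase_eq]]
  rw [Finset.sum_erase_eq_sub (Finset.mem_univ i)]
  ring

lemma pay_diff {m : ℕ} (lam : ℝ) (α : Fin m → ℝ) (s : Fin m → ℝ) (i : Fin m) (x : ℝ) :
    payH m lam α s i - payH m lam α (Function.update s i x) i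
      = (s i - x) * (lam / (m : ℝ) * ((∑ j, s j) + x) - α i * (s i + x)) := by
  unfold payH
  rw [sum_update_fin, Function.update_self]
  ring

/-- If `λ ∈ (λ₂, +∞)` with `λ₂` the saturation point, then
`s* = (Q_1, …, Q_m)` is the unique Nash equilibrium of `Γ_FL^h`. -/
theorem homFL_NE_above_saturation
    (m : ℕ) (hm : 1 ≤ m) (α q Q : Fin m → ℝ)
    (hα : ∀ i, 0 < α i) (hq : ∀ i, 0 < q i) (hqQ : ∀ i, q i ≤ Q i)
    (Qbar : ℝ) (hQbar : Qbar = (∑ i, Q i) / (m : ℝ))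
    (lam₂ : ℝ)
    (hlam₂ : IsGreatest (Set.range fun i => 2 * (α i * Q i / (Qbar + Q i / (m : ℝ)))) lam₂)
    (lam : ℝ) (hlam : lam ∈ Set.Ioi lam₂) :
    isNE m lam α q Q Q ∧ ∀ s : Fin m → ℝ, isNE m lam α q Q s → s = Q := by
  classical
  have hmpos : (0:ℝ) < (m : ℝ) := by exact_mod_cast hm
  haveI : Nonempty (Fin m) := ⟨⟨0, hm⟩⟩
  set T := ∑ i, Q i with hT
  have hQpos : ∀ i, 0 < Q i := fun i => lt_of_lt_of_le (hq i) (hqQ i)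
  have hTpos : 0 < T := Finset.sum_pos (fun i _ => hQpos i) Finset.univ_nonempty
  have hQleT : ∀ i, Q i ≤ T :=
    fun i => Finset.single_le_sum (fun j _ => (hQpos j).le) (Finset.mem_univ i)
  have hlam' : lam₂ < lam := hlam
  have hKI : ∀ i, 2 * α i * Q i < lam / (m : ℝ) * (T + Q i) := by
    intro i
    have h1 : 2 * (α i * Q i / (Qbar + Q i / (m : ℝ))) ≤ lam₂ := hlam₂.2 ⟨i, rfl⟩
    have hden : Qbar + Q i / (m : ℝ) = (T + Q i) / (m : ℝ) := by rw [hQbar]; ring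
    have hdpos : 0 < (T + Q i) / (m : ℝ) := div_pos (by linarith [hQpos i]) hmpos
    have h2 : 2 * α i * Q i / ((T + Q i) / (m : ℝ)) < lam := by
      have : 2 * (α i * Q i / ((T + Q i) / (m : ℝ))) = 2 * α i * Q i / ((T + Q i) / (m : ℝ)) := by
        ring
      rw [hden, this] at h1
      linarith
    have h3 := (div_lt_iff₀ hdpos).mp h2
    calc 2 * α i * Q i < lam * ((T + Q i) / (m : ℝ)) := h3
      _ = lam / (m : ℝ) * (T + Q i) := by ring
  have hlampos : 0 < lam := by
    set i0 : Fin m := ⟨0, hm⟩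
    have h1 := hKI i0
    have h2 : 0 < 2 * α i0 * Q i0 := by nlinarith [hα i0, hQpos i0]
    by_contra h
    push_neg at h
    have : lam / (m : ℝ) * (T + Q i0) ≤ 0 := by
      apply mul_nonpos_of_nonpos_of_nonneg
      · exact div_nonpos_of_nonpos_of_nonneg h hmpos.le
      · linarith [hQpos i0]
    linarith
  have hlm : 0 < lam / (m : ℝ) := by positivity
  constructor
  · refine ⟨fun i => ⟨hqQ i, le_refl _⟩, ?_⟩
    intro i x hx
    have hdiff := pay_diff lam α Q i x
    have hxpos : 0 < x := lt_of_lt_of_le (hq i) hx.1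
    have hbr : 0 ≤ lam / (m : ℝ) * (T + x) - α i * (Q i + x) := by
      rcases le_or_gt (α i) (lam / (m : ℝ)) with hc | hc
      · have h1 : α i * (Q i + x) ≤ lam / (m : ℝ) * (Q i + x) :=
          mul_le_mul_of_nonneg_right hc (by linarith [hQpos i])
        have h2 : lam / (m : ℝ) * (Q i + x) ≤ lam / (m : ℝ) * (T + x) :=
          mul_le_mul_of_nonneg_left (by linarith [hQleT i]) hlm.le
        linarith
      · have hKIi := hKI i
        have hprod : 0 ≤ (α i - lam / (m : ℝ)) * (Q i - x) :=
          mul_nonneg (by linarith) (by linarith [hx.2])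
        nlinarith [hprod, hKIi]
    nlinarith [mul_nonneg (sub_nonneg.mpr hx.2) hbr, hdiff]
  · intro s hs
    obtain ⟨hbox, hNE⟩ := hs
    by_contra hne
    set S := ∑ j, s j with hS
    have hsle : ∀ i, s i ≤ Q i := fun i => (hbox i).2
    have hspos : ∀ i, 0 < s i := fun i => lt_of_lt_of_le (hq i) (hbox i).1
    have hSltT : S < T := by
      obtain ⟨j, hj⟩ : ∃ j, s j ≠ Q j := by
        by_contra h; push_neg at h; exact hne (funext h)
      exact Finset.sum_lt_sum (fun i _ => hsle i)
        ⟨j, Finset.mem_univ j, lt_of_le_of_ne (hsle j) hj⟩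
    have hkey : ∀ i, Q i * S < s i * T := by
      intro i
      rcases eq_or_lt_of_le (hsle i) with heq | hlt
      · rw [heq]
        exact mul_lt_mul_of_pos_left hSltT (hQpos i)
      · -- right-derivative condition : g(s i) ≤ 0
        have hg : lam / (m : ℝ) * (S + s i) - α i * (s i + s i) ≤ 0 := by
          by_contra hgpos
          push_neg at hgpos
          have hdev : ∀ x, s i < x → x ≤ Q i →
              lam / (m : ℝ) * (S + x) - α i * (s i + x) ≤ 0 := by
            intro x h1 h2
            have hx : x ∈ Set.Icc (q i) (Q i) := ⟨le_trans (hbox i).1 h1.le, h2⟩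
            have h3 := hNE i x hx
            have hdiff := pay_diff lam α s i x
            nlinarith [hdiff, h3]
          rcases le_or_gt 0 (lam / (m : ℝ) - α i) with hcpos | hcneg
          · have h4 := hdev (Q i) hlt le_rfl
            nlinarith [mul_nonneg hcpos (by linarith : (0:ℝ) ≤ Q i - s i)]
          · have hdpos2 : (0:ℝ) < 2 * (α i - lam / (m : ℝ)) := by linarith
            have hg0pos : 0 < (lam / (m : ℝ) * (S + s i) - α i * (s i + s i))
                / (2 * (α i - lam / (m : ℝ))) := div_pos hgpos hdpos2
            set t : ℝ := min (Q i - s i)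
              ((lam / (m : ℝ) * (S + s i) - α i * (s i + s i))
                / (2 * (α i - lam / (m : ℝ)))) with ht
            have htpos : 0 < t := lt_min (by linarith) hg0pos
            have hx2 : s i + t ≤ Q i := by
              have := min_le_left (Q i - s i)
                ((lam / (m : ℝ) * (S + s i) - α i * (s i + s i))
                  / (2 * (α i - lam / (m : ℝ))))
              linarith
            have h4 := hdev (s i + t) (by linarith) hx2
            have htb : t ≤ (lam / (m : ℝ) * (S + s i) - α i * (s i + s i))
                / (2 * (α i - lam / (m : ℝ))) := min_le_right _ _
            have h5 := (le_div_iff₀ hdpos2).mp htb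
            -- h5 : t * (2 * (α i - lam / m)) ≤ g0 ; h4 : g0 + (lam/m - α i) * t ≤ 0
            nlinarith [h4, h5, hgpos]
        -- combine hg with hKI i
        have hKIi := hKI i
        have h4 : lam / (m : ℝ) * (S + s i) * Q i ≤ 2 * α i * s i * Q i := by
          nlinarith [hg, hQpos i]
        have h5 : 2 * α i * Q i * s i < lam / (m : ℝ) * (T + Q i) * s i :=
          mul_lt_mul_of_pos_right hKIi (hspos i)
        have hX : (S + s i) * Q i < (T + Q i) * s i := by
          by_contra hX
          push_neg at hX
          have := mul_le_mul_of_nonneg_left hX hlm.le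
          nlinarith
        nlinarith [hX]
    have hsum := Finset.sum_lt_sum_of_nonempty Finset.univ_nonempty
      (fun i _ => hkey i)
    rw [← Finset.sum_mul, ← Finset.sum_mul] at hsum
    rw [← hS, ← hT] at hsum
    nlinarith [hsum]
end

section
/- Assume λ ∈ (0, λ̄) and λ ≠ λ*. Let {s^k}_{k≥0} be a best-response sequence of the homogeneous FL game Γ_FL^h. Then the sequence {s^k}_{k≥1} converges to the unique Nash equilibrium of Γ_FL^h. -/
open Finset Filter

/-- A best-response sequence of `Γ_FL^h`: at stage `k+1`, players sequentially
update, player `i` best-responding to the already-updated strategies of players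
`j < i` and the previous strategies of players `j > i`. -/
def isBRSeq (m : ℕ) (lam : ℝ) (α q Q : Fin m → ℝ) (s : ℕ → Fin m → ℝ) : Prop :=
  (∀ i, s 0 i ∈ Set.Icc (q i) (Q i)) ∧
  ∀ k : ℕ, ∀ i : Fin m,
    s (k + 1) i ∈ Set.Icc (q i) (Q i) ∧
    ∀ x ∈ Set.Icc (q i) (Q i),
      payH m lam α
        (Function.update (fun j => if (j : ℕ) < (i : ℕ) then s (k + 1) j else s k j) i x) i ≤
      payH m lam α
        (Function.update (fun j => if (j : ℕ) < (i : ℕ) then s (k + 1) j else s k j) i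
          (s (k + 1) i)) i


namespace HomFLAux

noncomputable def cc (m : ℕ) (lam : ℝ) (a : ℝ) : ℝ := lam / (2 * ((m : ℝ) * a - lam))


/-- clip to `[lo,hi]`. -/
noncomputable def clip (lo hi x : ℝ) : ℝ := max lo (min hi x)

lemma clip_mem (lo hi : ℝ) (h : lo ≤ hi) (x : ℝ) : clip lo hi x ∈ Set.Icc lo hi :=
  ⟨le_max_left _ _, max_le h (min_le_left _ _)⟩

lemma clip_mono (lo hi : ℝ) {a b : ℝ} (hab : a ≤ b) : clip lo hi a ≤ clip lo hi b :=
  max_le_max le_rfl (min_le_min le_rfl hab)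

lemma min_sub_min (hi : ℝ) {a b : ℝ} (hab : a ≤ b) : min hi b - min hi a ≤ b - a := by
  rcases le_total b hi with h | h <;> rcases le_total a hi with h' | h' <;>
    simp [min_eq_left, min_eq_right, h, h'] <;> linarith

lemma max_sub_max (lo : ℝ) {a b : ℝ} (hab : a ≤ b) : max lo b - max lo a ≤ b - a := by
  rcases le_total lo b with h | h <;> rcases le_total lo a with h' | h' <;>
    simp [max_eq_left, max_eq_right, h, h'] <;> linarith

lemma clip_lip (lo hi : ℝ) {a b : ℝ} (hab : a ≤ b) : clip lo hi b - clip lo hi a ≤ b - a := by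
  have h1 := min_sub_min hi hab
  have h2 := max_sub_max lo (min_le_min (le_refl hi) hab)
  unfold clip
  linarith

lemma clip_eq_of_ge (lo hi x : ℝ) (h : hi ≤ x) (hlohi : lo ≤ hi) : clip lo hi x = hi := by
  unfold clip; rw [min_eq_left h, max_eq_right hlohi]

lemma clip_ge_self (lo hi x : ℝ) (h : x ≤ hi) : x ≤ clip lo hi x := by
  unfold clip; rw [min_eq_right h]; exact le_max_right _ _

/-- nearest point characterization -/
lemma nearest (lo hi θ y : ℝ) (hlohi : lo ≤ hi) (hy : y ∈ Set.Icc lo hi)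
    (h : ∀ x ∈ Set.Icc lo hi, (y - θ)^2 ≤ (x - θ)^2) : y = clip lo hi θ := by
  obtain ⟨hy1, hy2⟩ := hy
  rcases le_total θ lo with h1 | h1
  · have hc : clip lo hi θ = lo := by unfold clip; rw [min_eq_right (h1.trans hlohi), max_eq_left h1]
    rw [hc]
    have := h lo ⟨le_rfl, hlohi⟩
    nlinarith
  · rcases le_total hi θ with h2 | h2
    · rw [clip_eq_of_ge lo hi θ h2 hlohi]
      have := h hi ⟨hlohi, le_rfl⟩
      nlinarith
    · have hc : clip lo hi θ = θ := by unfold clip; rw [min_eq_right h2, max_eq_right h1]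
      rw [hc]
      have := h θ ⟨h1, h2⟩
      nlinarith

lemma nearest_min (lo hi θ : ℝ) (hlohi : lo ≤ hi) :
    ∀ x ∈ Set.Icc lo hi, (clip lo hi θ - θ)^2 ≤ (x - θ)^2 := by
  intro x ⟨hx1, hx2⟩
  rcases le_total θ lo with h1 | h1
  · have hc : clip lo hi θ = lo := by unfold clip; rw [min_eq_right (h1.trans hlohi), max_eq_left h1]
    rw [hc]; nlinarith
  · rcases le_total hi θ with h2 | h2
    · rw [clip_eq_of_ge lo hi θ h2 hlohi]; nlinarith
    · have hc : clip lo hi θ = θ := by unfold clip; rw [min_eq_right h2, max_eq_right h1]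
      rw [hc]; nlinarith


lemma sum_update (m : ℕ) (t : Fin m → ℝ) (i : Fin m) (x : ℝ) :
    ∑ j, Function.update t i x j = (∑ j, t j) - t i + x := by
  rw [Finset.sum_update_of_mem (mem_univ i), ← Finset.sum_erase_eq_sub (mem_univ i),
    Finset.erase_eq]
  ring

lemma payH_update (m : ℕ) (lam : ℝ) (α : Fin m → ℝ) (t : Fin m → ℝ) (i : Fin m) (x : ℝ) :
    payH m lam α (Function.update t i x) i
      = lam / (m : ℝ) * (((∑ j, t j) - t i) + x) * x - α i * x ^ 2 := by
  unfold payH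
  rw [sum_update, Function.update_self]

lemma payH_quad (m : ℕ) (lam : ℝ) (α : Fin m → ℝ) (t : Fin m → ℝ) (i : Fin m) (x : ℝ)
    (hm : 0 < m) (hαi : lam < (m : ℝ) * α i) :
    payH m lam α (Function.update t i x) i
      = (α i - lam / (m : ℝ)) * (cc m lam (α i) * ((∑ j, t j) - t i)) ^ 2
        - (α i - lam / (m : ℝ)) * (x - cc m lam (α i) * ((∑ j, t j) - t i)) ^ 2 := by
  have hm0 : (m : ℝ) ≠ 0 := Nat.cast_ne_zero.mpr hm.ne'
  have hd : (m : ℝ) * α i - lam ≠ 0 := by linarith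
  rw [payH_update]
  unfold cc
  field_simp
  ring


section BR
variable {m : ℕ} {lam : ℝ} {α : Fin m → ℝ} {q Q : Fin m → ℝ}

lemma Bpos {i : Fin m} (hm : 0 < m) (hαi : lam < (m : ℝ) * α i) : 0 < α i - lam / (m : ℝ) := by
  have hm' : (0:ℝ) < m := Nat.cast_pos.mpr hm
  have : lam / (m:ℝ) < α i := (div_lt_iff₀ hm').mpr (by linarith)
  linarith

lemma br_unique (hm : 0 < m) {i : Fin m} (hαi : lam < (m : ℝ) * α i) (hqQ : q i ≤ Q i)
    (t : Fin m → ℝ) (y : ℝ) (hy : y ∈ Set.Icc (q i) (Q i))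
    (hmax : ∀ x ∈ Set.Icc (q i) (Q i),
      payH m lam α (Function.update t i x) i ≤ payH m lam α (Function.update t i y) i) :
    y = clip (q i) (Q i) (cc m lam (α i) * ((∑ j, t j) - t i)) := by
  have hB := Bpos (α := α) (i := i) hm hαi
  apply nearest _ _ _ _ hqQ hy
  intro x hx
  have h := hmax x hx
  rw [payH_quad m lam α t i x hm hαi, payH_quad m lam α t i y hm hαi] at h
  nlinarith

lemma br_max (hm : 0 < m) {i : Fin m} (hαi : lam < (m : ℝ) * α i) (hqQ : q i ≤ Q i)
    (t : Fin m → ℝ) {y : ℝ}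
    (hy : y = clip (q i) (Q i) (cc m lam (α i) * ((∑ j, t j) - t i))) :
    ∀ x ∈ Set.Icc (q i) (Q i),
      payH m lam α (Function.update t i x) i ≤ payH m lam α (Function.update t i y) i := by
  have hB := Bpos (α := α) (i := i) hm hαi
  intro x hx
  have h := nearest_min (q i) (Q i) (cc m lam (α i) * ((∑ j, t j) - t i)) hqQ x hx
  rw [← hy] at h
  rw [payH_quad m lam α t i x hm hαi, payH_quad m lam α t i y hm hαi]
  nlinarith

end BR

section GS
variable (m : ℕ) (lam : ℝ) (α q Q : Fin m → ℝ)

noncomputable def br (t : Fin m → ℝ) (i : Fin m) : ℝ :=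
  clip (q i) (Q i) (cc m lam (α i) * ((∑ j, t j) - t i))

noncomputable def seqUpd (s : Fin m → ℝ) : ℕ → Fin m → ℝ
  | 0 => s
  | (n+1) =>
    if h : n < m then
      Function.update (seqUpd s n) ⟨n, h⟩ (br m lam α q Q (seqUpd s n) ⟨n, h⟩)
    else seqUpd s n

noncomputable def GS (s : Fin m → ℝ) : Fin m → ℝ := seqUpd m lam α q Q s m

variable {m lam α q Q}

lemma seqUpd_apply_ge (s : Fin m → ℝ) : ∀ n (j : Fin m), n ≤ (j : ℕ) →
    seqUpd m lam α q Q s n j = s j := by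
  intro n
  induction n with
  | zero => intro j _; rfl
  | succ n ih =>
    intro j hj
    show seqUpd m lam α q Q s (n+1) j = s j
    conv_lhs => rw [seqUpd]
    split_ifs with h
    · rw [Function.update_of_ne, ih j (Nat.le_of_succ_le hj)]
      intro hij
      rw [hij] at hj
      simp at hj
    · exact ih j (Nat.le_of_succ_le hj)

lemma seqUpd_apply_lt (s : Fin m → ℝ) : ∀ n (j : Fin m), (j : ℕ) < n →
    seqUpd m lam α q Q s n j = br m lam α q Q (seqUpd m lam α q Q s (j : ℕ)) j := by
  intro n
  induction n with
  | zero => intro j hj; omega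
  | succ n ih =>
    intro j hj
    rcases Nat.lt_or_ge (j : ℕ) n with h' | h'
    · show seqUpd m lam α q Q s (n+1) j = _
      conv_lhs => rw [seqUpd]
      split_ifs with h
      · rw [Function.update_of_ne]
        · exact ih j h'
        · intro hij; rw [hij] at h'; simp at h'
      · exact ih j h'
    · have hjn : (j : ℕ) = n := by omega
      show seqUpd m lam α q Q s (n+1) j = _
      conv_lhs => rw [seqUpd]
      have hn : n < m := by omega
      rw [dif_pos hn]
      have hje : (⟨n, hn⟩ : Fin m) = j := by ext; simp [hjn]
      rw [hje, Function.update_self, hjn]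

lemma GS_apply (s : Fin m → ℝ) (j : Fin m) :
    GS m lam α q Q s j = br m lam α q Q (seqUpd m lam α q Q s (j : ℕ)) j :=
  seqUpd_apply_lt s m j j.isLt

lemma seqUpd_eq_mix (s : Fin m → ℝ) (n : ℕ) (hn : n ≤ m) :
    seqUpd m lam α q Q s n = fun k : Fin m => if (k : ℕ) < n then GS m lam α q Q s k else s k := by
  funext k
  rcases Nat.lt_or_ge (k : ℕ) n with h | h
  · rw [if_pos h, seqUpd_apply_lt s n k h, GS_apply]
  · rw [if_neg (by omega), seqUpd_apply_ge s n k h]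

lemma GS_eq_mix (s : Fin m → ℝ) (j : Fin m) :
    GS m lam α q Q s j
      = br m lam α q Q (fun k : Fin m => if (k : ℕ) < (j : ℕ) then GS m lam α q Q s k else s k) j := by
  rw [GS_apply, seqUpd_eq_mix s (j : ℕ) j.isLt.le]

end GS

section Mono
variable {m : ℕ} {lam : ℝ} {α q Q : Fin m → ℝ}

lemma sum_sub_self (t : Fin m → ℝ) (i : Fin m) :
    (∑ j, t j) - t i = ∑ j ∈ univ.erase i, t j := by
  rw [Finset.sum_erase_eq_sub (mem_univ i)]

lemma br_mono (hcc : ∀ i, 0 ≤ cc m lam (α i)) {s t : Fin m → ℝ} (hst : ∀ j, s j ≤ t j)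
    (i : Fin m) : br m lam α q Q s i ≤ br m lam α q Q t i := by
  unfold br
  apply clip_mono
  apply mul_le_mul_of_nonneg_left _ (hcc i)
  rw [sum_sub_self, sum_sub_self]
  exact Finset.sum_le_sum fun j _ => hst j

lemma seqUpd_mono (hcc : ∀ i, 0 ≤ cc m lam (α i)) {s t : Fin m → ℝ} (hst : ∀ j, s j ≤ t j) :
    ∀ n j, seqUpd m lam α q Q s n j ≤ seqUpd m lam α q Q t n j := by
  intro n
  induction n with
  | zero => exact hst
  | succ n ih =>
    intro j
    show seqUpd m lam α q Q s (n+1) j ≤ seqUpd m lam α q Q t (n+1) j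
    rw [seqUpd, seqUpd]
    split_ifs with h
    · rcases eq_or_ne j ⟨n, h⟩ with rfl | hne
      · rw [Function.update_self, Function.update_self]
        exact br_mono hcc ih _
      · rw [Function.update_of_ne hne, Function.update_of_ne hne]
        exact ih j
    · exact ih j

lemma GS_mono (hcc : ∀ i, 0 ≤ cc m lam (α i)) {s t : Fin m → ℝ} (hst : ∀ j, s j ≤ t j) :
    ∀ j, GS m lam α q Q s j ≤ GS m lam α q Q t j :=
  seqUpd_mono hcc hst m

lemma GS_mem_box (hqQ : ∀ i, q i ≤ Q i) (s : Fin m → ℝ) (i : Fin m) :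
    GS m lam α q Q s i ∈ Set.Icc (q i) (Q i) := by
  rw [GS_apply]
  exact clip_mem _ _ (hqQ i) _

end Mono

end HomFLAux

namespace HomFLAux

variable {m : ℕ} (G : (Fin m → ℝ) → (Fin m → ℝ)) {q Q : Fin m → ℝ}

lemma iter_tendsto (hqQ : ∀ i, q i ≤ Q i)
    (hbox : ∀ s i, G s i ∈ Set.Icc (q i) (Q i))
    (hmono : ∀ {s t : Fin m → ℝ}, (∀ j, s j ≤ t j) → ∀ j, G s j ≤ G t j) :
    ∃ w : Fin m → ℝ, (∀ j, Tendsto (fun k => G^[k] q j) atTop (nhds (w j))) ∧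
      (∀ k j, G^[k] q j ≤ G^[k+1] q j) ∧ (∀ k j, q j ≤ G^[k] q j ∧ G^[k] q j ≤ Q j) := by
  have hstep : ∀ k j, G^[k] q j ≤ G^[k+1] q j := by
    intro k
    induction k with
    | zero => intro j; simpa using (hbox q j).1
    | succ k ih =>
      intro j
      conv_lhs => rw [Function.iterate_succ_apply']
      conv_rhs => rw [Function.iterate_succ_apply']
      exact hmono ih j
  have hbox' : ∀ k j, q j ≤ G^[k] q j ∧ G^[k] q j ≤ Q j := by
    intro k j
    cases k with
    | zero => exact ⟨le_rfl, hqQ j⟩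
    | succ k =>
      rw [Function.iterate_succ_apply']
      exact ⟨(hbox _ j).1, (hbox _ j).2⟩
  refine ⟨fun j => ⨆ k, G^[k] q j, fun j => ?_, hstep, hbox'⟩
  apply tendsto_atTop_ciSup (monotone_nat_of_le_succ fun k => hstep k j)
  exact ⟨Q j, by rintro x ⟨k, rfl⟩; exact (hbox' k j).2⟩

lemma iter_tendsto_anti (hqQ : ∀ i, q i ≤ Q i)
    (hbox : ∀ s i, G s i ∈ Set.Icc (q i) (Q i))
    (hmono : ∀ {s t : Fin m → ℝ}, (∀ j, s j ≤ t j) → ∀ j, G s j ≤ G t j) :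
    ∃ w : Fin m → ℝ, (∀ j, Tendsto (fun k => G^[k] Q j) atTop (nhds (w j))) ∧
      (∀ k j, G^[k+1] Q j ≤ G^[k] Q j) ∧ (∀ k j, q j ≤ G^[k] Q j ∧ G^[k] Q j ≤ Q j) := by
  have hstep : ∀ k j, G^[k+1] Q j ≤ G^[k] Q j := by
    intro k
    induction k with
    | zero => intro j; simpa using (hbox Q j).2
    | succ k ih =>
      intro j
      conv_lhs => rw [Function.iterate_succ_apply']
      conv_rhs => rw [Function.iterate_succ_apply']
      exact hmono ih j
  have hbox' : ∀ k j, q j ≤ G^[k] Q j ∧ G^[k] Q j ≤ Q j := by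
    intro k j
    cases k with
    | zero => exact ⟨hqQ j, le_rfl⟩
    | succ k =>
      rw [Function.iterate_succ_apply']
      exact ⟨(hbox _ j).1, (hbox _ j).2⟩
  refine ⟨fun j => ⨅ k, G^[k] Q j, fun j => ?_, hstep, hbox'⟩
  apply tendsto_atTop_ciInf (antitone_nat_of_succ_le fun k => hstep k j)
  exact ⟨q j, by rintro x ⟨k, rfl⟩; exact (hbox' k j).1⟩

end HomFLAux

namespace HomFLAux
section Limit
variable {m : ℕ} {lam : ℝ} {α q Q : Fin m → ℝ}

lemma limit_fixed (u : ℕ → Fin m → ℝ) (w : Fin m → ℝ)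
    (hu : ∀ k, u (k+1) = GS m lam α q Q (u k))
    (hw : ∀ j, Tendsto (fun k => u k j) atTop (nhds (w j))) :
    ∀ j, w j = br m lam α q Q w j := by
  intro j
  set mix : ℕ → Fin m → ℝ := fun k i => if (i : ℕ) < (j : ℕ) then u (k+1) i else u k i with hmixdef
  have h1 : ∀ k, u (k+1) j
      = clip (q j) (Q j) (cc m lam (α j) * ((∑ i, mix k i) - mix k j)) := by
    intro k
    have hfm : (fun i : Fin m => if (i : ℕ) < (j : ℕ) then GS m lam α q Q (u k) i else u k i)
        = mix k := by
      funext i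
      simp only [hmixdef]
      split_ifs with h
      · exact (congrFun (hu k) i).symm
      · rfl
    rw [hu k, GS_eq_mix, hfm]
    rfl
  have hmix : ∀ i, Tendsto (fun k => mix k i) atTop (nhds (w i)) := by
    intro i
    simp only [hmixdef]
    split_ifs with h
    · exact (tendsto_add_atTop_iff_nat 1).mpr (hw i)
    · exact hw i
  have hsum : Tendsto (fun k => ∑ i, mix k i) atTop (nhds (∑ i, w i)) :=
    tendsto_finset_sum _ (fun i _ => hmix i)
  have harg : Tendsto (fun k => cc m lam (α j) * ((∑ i, mix k i) - mix k j)) atTop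
      (nhds (cc m lam (α j) * ((∑ i, w i) - w j))) := (hsum.sub (hmix j)).const_mul _
  have hclip : Continuous (fun x : ℝ => clip (q j) (Q j) x) :=
    continuous_const.max (continuous_const.min continuous_id)
  have hrhs : Tendsto (fun k => clip (q j) (Q j) (cc m lam (α j) * ((∑ i, mix k i) - mix k j)))
      atTop (nhds (clip (q j) (Q j) (cc m lam (α j) * ((∑ i, w i) - w j)))) :=
    (hclip.tendsto _).comp harg
  have heq : (fun k => clip (q j) (Q j) (cc m lam (α j) * ((∑ i, mix k i) - mix k j)))
      = fun k => u (k+1) j := funext fun k => (h1 k).symm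
  rw [heq] at hrhs
  have hlhs : Tendsto (fun k => u (k+1) j) atTop (nhds (w j)) :=
    (tendsto_add_atTop_iff_nat 1).mpr (hw j)
  exact tendsto_nhds_unique hlhs hrhs

end Limit
end HomFLAux

namespace HomFLAux
section NE
variable {m : ℕ} {lam : ℝ} {α q Q : Fin m → ℝ}

lemma fixed_isNE (hm : 0 < m) (hαi : ∀ i, lam < (m : ℝ) * α i) (hqQ : ∀ i, q i ≤ Q i)
    {w : Fin m → ℝ} (hw : ∀ j, w j = br m lam α q Q w j) : isNE m lam α q Q w := by
  constructor
  · intro i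
    rw [hw i, br]
    exact clip_mem _ _ (hqQ i) _
  · intro i x hx
    have h := br_max hm (hαi i) (hqQ i) w (hw i) x hx
    rwa [Function.update_eq_self] at h

lemma isNE_fixed (hm : 0 < m) (hαi : ∀ i, lam < (m : ℝ) * α i) (hqQ : ∀ i, q i ≤ Q i)
    {w : Fin m → ℝ} (hw : isNE m lam α q Q w) : ∀ j, w j = br m lam α q Q w j := by
  intro j
  apply br_unique hm (hαi j) (hqQ j) w (w j) (hw.1 j)
  intro x hx
  rw [Function.update_eq_self]
  exact hw.2 j x hx

/-- from `s = clip (c (T - s))` to `s = clip (r T)` -/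
lemma clip_rep (lo hi c r T s : ℝ) (hlohi : lo ≤ hi) (hc : 0 < c) (hr : (1 + c) * r = c)
    (hs : s = clip lo hi (c * (T - s))) : s = clip lo hi (r * T) := by
  have hkey : c * (T - s) - s = (1 + c) * (r * T - s) := by linear_combination (-T) * hr
  have hlo : lo ≤ s := hs ▸ le_max_left _ _
  have hhi : s ≤ hi := hs ▸ max_le hlohi (min_le_left _ _)
  rcases lt_trichotomy s (clip lo hi (r * T)) with hA | h | hB
  · exfalso
    have h2 : s < min hi (r * T) := by
      rcases lt_max_iff.mp hA with h' | h'
      · linarith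
      · exact h'
    obtain ⟨hshi, hsrT⟩ := lt_min_iff.mp h2
    have h3 : s < c * (T - s) := by nlinarith
    have h4 : s < min hi (c * (T - s)) := lt_min_iff.mpr ⟨hshi, h3⟩
    have h5 : s < max lo (min hi (c * (T - s))) := h4.trans_le (le_max_right _ _)
    rw [← clip, ← hs] at h5
    exact lt_irrefl _ h5
  · exact h
  · exfalso
    have hlos : lo < s := lt_of_le_of_lt (le_max_left _ _) hB
    have hmin : min hi (c * (T - s)) = s := by
      rcases max_choice lo (min hi (c * (T - s))) with h' | h'
      · rw [← clip, ← hs] at h'; linarith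
      · rw [← clip, ← hs] at h'; exact h'.symm
    have hy : s ≤ c * (T - s) := (le_of_eq hmin.symm).trans (min_le_right _ _)
    have hrT : s ≤ r * T := by nlinarith
    have : s ≤ min hi (r * T) := le_min hhi hrT
    have : s ≤ clip lo hi (r * T) := this.trans (le_max_right _ _)
    linarith

end NE
end HomFLAux

namespace HomFLAux

noncomputable def rr (m : ℕ) (lam a : ℝ) : ℝ := lam / (2 * (m : ℝ) * a - lam)

section Unique
variable {m : ℕ} {lam : ℝ} {α q Q : Fin m → ℝ}

lemma denom_pos {i : Fin m} (hlam0 : 0 < lam) (hαi : lam < (m : ℝ) * α i) :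
    0 < 2 * (m : ℝ) * α i - lam := by nlinarith

lemma rr_pos {i : Fin m} (hlam0 : 0 < lam) (hαi : lam < (m : ℝ) * α i) :
    0 < rr m lam (α i) := div_pos hlam0 (denom_pos hlam0 hαi)

lemma cc_pos {i : Fin m} (hlam0 : 0 < lam) (hαi : lam < (m : ℝ) * α i) :
    0 < cc m lam (α i) := div_pos hlam0 (by nlinarith)

lemma rr_cc {i : Fin m} (hlam0 : 0 < lam) (hαi : lam < (m : ℝ) * α i) :
    (1 + cc m lam (α i)) * rr m lam (α i) = cc m lam (α i) := by
  have h1 : (m : ℝ) * α i - lam ≠ 0 := by nlinarith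
  have h2 : 2 * (m : ℝ) * α i - lam ≠ 0 := (denom_pos hlam0 hαi).ne'
  unfold cc rr
  field_simp
  ring

lemma NE_rep (hm : 0 < m) (hlam0 : 0 < lam) (hαi : ∀ i, lam < (m : ℝ) * α i)
    (hqQ : ∀ i, q i ≤ Q i) {w : Fin m → ℝ} (hw : isNE m lam α q Q w) (i : Fin m) :
    w i = clip (q i) (Q i) (rr m lam (α i) * ∑ j, w j) := by
  have h := isNE_fixed hm hαi hqQ hw i
  rw [br] at h
  exact clip_rep _ _ _ _ _ _ (hqQ i) (cc_pos hlam0 (hαi i)) (rr_cc hlam0 (hαi i))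
    (by rw [mul_sub] at h ⊢; exact h)

lemma NE_unique_ordered (hm : 0 < m) (hlam0 : 0 < lam) (hαi : ∀ i, lam < (m : ℝ) * α i)
    (hq : ∀ i, 0 < q i) (hqQ : ∀ i, q i ≤ Q i)
    (hR : (∑ i, rr m lam (α i)) ≠ 1)
    {u v : Fin m → ℝ} (hu : isNE m lam α q Q u) (hv : isNE m lam α q Q v)
    (hT : ∑ j, u j ≤ ∑ j, v j) : u = v := by
  haveI : Nonempty (Fin m) := Fin.pos_iff_nonempty.mp hm
  set Tu := ∑ j, u j with hTu
  set Tv := ∑ j, v j with hTv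
  have hrepu := NE_rep hm hlam0 hαi hqQ hu
  have hrepv := NE_rep hm hlam0 hαi hqQ hv
  set D := Tv - Tu with hDdef
  have hD0 : 0 ≤ D := by simp [hDdef]; linarith
  have hlip : ∀ i, v i - u i ≤ rr m lam (α i) * D := by
    intro i
    have h1 : rr m lam (α i) * Tu ≤ rr m lam (α i) * Tv :=
      mul_le_mul_of_nonneg_left hT (rr_pos hlam0 (hαi i)).le
    have := clip_lip (q i) (Q i) h1
    rw [← hrepu i, ← hrepv i] at this
    calc v i - u i ≤ rr m lam (α i) * Tv - rr m lam (α i) * Tu := this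
    _ = rr m lam (α i) * D := by ring
  have hDsum : D = ∑ i, (v i - u i) := by rw [hDdef, hTu, hTv, Finset.sum_sub_distrib]
  set p : Fin m → Prop := fun i => Q i ≤ rr m lam (α i) * Tu with hp
  have hclipA : ∀ i, p i → u i = Q i ∧ v i = Q i := by
    intro i hpi
    constructor
    · rw [hrepu i]; exact clip_eq_of_ge _ _ _ hpi (hqQ i)
    · rw [hrepv i]
      apply clip_eq_of_ge _ _ _ _ (hqQ i)
      calc Q i ≤ rr m lam (α i) * Tu := hpi
      _ ≤ rr m lam (α i) * Tv := mul_le_mul_of_nonneg_left hT (rr_pos hlam0 (hαi i)).le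
  classical
  have hsplit := Finset.sum_filter_add_sum_filter_not univ p (fun i => v i - u i)
  have hzero : ∑ i ∈ univ.filter p, (v i - u i) = 0 := by
    apply Finset.sum_eq_zero
    intro i hi
    obtain ⟨h1, h2⟩ := hclipA i (Finset.mem_filter.mp hi).2
    rw [h1, h2, sub_self]
  set ρ := ∑ i ∈ univ.filter (fun i => ¬ p i), rr m lam (α i) with hρ
  have hDle : D ≤ ρ * D := by
    conv_lhs => rw [hDsum, ← hsplit, hzero, zero_add]
    rw [hρ, Finset.sum_mul]
    exact Finset.sum_le_sum fun i _ => hlip i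
  have hrnn : ∀ i, 0 ≤ rr m lam (α i) := fun i => (rr_pos hlam0 (hαi i)).le
  have hρlt : ρ < 1 := by
    rcases lt_or_gt_of_ne hR with hR1 | hR1
    · calc ρ ≤ ∑ i, rr m lam (α i) :=
          Finset.sum_le_sum_of_subset_of_nonneg (Finset.filter_subset _ _)
            (fun i _ _ => hrnn i)
      _ < 1 := hR1
    · -- R > 1 case
      have hTupos : 0 < Tu := by
        rw [hTu]
        have h1 : 0 < ∑ j, q j := Finset.sum_pos (fun i _ => hq i) Finset.univ_nonempty
        have h2 : ∑ j, q j ≤ ∑ j, u j := Finset.sum_le_sum fun i _ => (hu.1 i).1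
        linarith
      have hlb : ∀ i ∈ univ.filter (fun i => ¬ p i), rr m lam (α i) * Tu ≤ u i := by
        intro i hi
        have hnp : ¬ p i := (Finset.mem_filter.mp hi).2
        have hnp2 : rr m lam (α i) * Tu ≤ Q i := (not_le.mp hnp).le
        rw [hrepu i]
        exact clip_ge_self _ _ _ hnp2
      have hTsplit := Finset.sum_filter_add_sum_filter_not univ p u
      have hAQ : ∑ i ∈ univ.filter p, u i = ∑ i ∈ univ.filter p, Q i :=
        Finset.sum_congr rfl fun i hi => (hclipA i (Finset.mem_filter.mp hi).2).1
      have hmain : ∑ i ∈ univ.filter p, Q i + ρ * Tu ≤ Tu := by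
        rw [hρ, Finset.sum_mul, ← hAQ]
        calc ∑ i ∈ univ.filter p, u i + ∑ i ∈ univ.filter (fun i => ¬ p i),
            rr m lam (α i) * Tu
            ≤ ∑ i ∈ univ.filter p, u i + ∑ i ∈ univ.filter (fun i => ¬ p i), u i :=
              by gcongr with i hi; exact hlb i hi
        _ = Tu := by rw [hTsplit]
      rcases Finset.eq_empty_or_nonempty (univ.filter p) with hA | ⟨i0, hi0⟩
      · exfalso
        have hρR : ρ = ∑ i, rr m lam (α i) := by
          rw [hρ]
          congr 1
          rw [Finset.filter_not, hA, Finset.sdiff_empty]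
        rw [hA, Finset.sum_empty] at hmain
        rw [hρR] at hmain
        nlinarith
      · have hQpos : 0 < ∑ i ∈ univ.filter p, Q i := by
          apply Finset.sum_pos (fun i _ => lt_of_lt_of_le (hq i) (hqQ i)) ⟨i0, hi0⟩
        nlinarith
  have hDz : D = 0 := le_antisymm (by nlinarith) hD0
  have hTuv : Tu = Tv := by rw [hDdef] at hDz; linarith
  funext i
  rw [hrepu i, hrepv i, ← hTu, ← hTv, hTuv]

end Unique
end HomFLAux

namespace HomFLAux

lemma sum_rr_ne_one {m : ℕ} {lam lamstar : ℝ} {α : Fin m → ℝ} (hm : 0 < m)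
    (hαi : ∀ i, lam < (m : ℝ) * α i) (hαi' : ∀ i, lamstar < (m : ℝ) * α i)
    (hα : ∀ i, 0 < α i)
    (hlam0 : 0 < lam) (hls0 : 0 < lamstar)
    (hlseq : ∑ i, lamstar / (2 * (m : ℝ) * α i - lamstar) = 1)
    (hne : lam ≠ lamstar) : (∑ i, rr m lam (α i)) ≠ 1 := by
  haveI : Nonempty (Fin m) := Fin.pos_iff_nonempty.mp hm
  have hm' : (0:ℝ) < m := Nat.cast_pos.mpr hm
  have key : ∀ (a b : ℝ), 0 < a → a < b → (∀ i, b < (m : ℝ) * α i) →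
      ∑ i, a / (2 * (m : ℝ) * α i - a) < ∑ i, b / (2 * (m : ℝ) * α i - b) := by
    intro a b ha hab hb
    apply Finset.sum_lt_sum_of_nonempty Finset.univ_nonempty
    intro i _
    have h1 : 0 < 2 * (m : ℝ) * α i - a := by have := hb i; nlinarith
    have h2 : 0 < 2 * (m : ℝ) * α i - b := by have := hb i; nlinarith
    rw [div_lt_div_iff₀ h1 h2]
    have : 0 < (m : ℝ) * α i := mul_pos hm' (hα i)
    nlinarith
  rcases lt_or_gt_of_ne hne with h | h
  · have := key lam lamstar hlam0 h hαi'
    rw [hlseq] at this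
    exact ne_of_lt (by simpa [rr] using this)
  · have := key lamstar lam hls0 h hαi
    rw [hlseq] at this
    exact ne_of_gt (by simpa [rr] using this)

end HomFLAux

/-- For `λ ∈ (0, λ̄)`, `λ ≠ λ*`, every best-response sequence
converges to the unique Nash equilibrium of `Γ_FL^h`. -/
theorem homFL_best_response_converges
    (m : ℕ) (hm : 1 ≤ m) (α q Q : Fin m → ℝ)
    (hα : ∀ i, 0 < α i) (hq : ∀ i, 0 < q i) (hqQ : ∀ i, q i ≤ Q i)
    (αmin : ℝ) (hαmin : IsLeast (Set.range α) αmin)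
    (lamstar : ℝ) (hlamstar : lamstar ∈ Set.Ioo 0 ((m : ℝ) * αmin))
    (hlseq : ∑ i, lamstar / (2 * (m : ℝ) * α i - lamstar) = 1)
    (lam : ℝ) (hlam : lam ∈ Set.Ioo 0 ((m : ℝ) * αmin)) (hne : lam ≠ lamstar)
    (s : ℕ → Fin m → ℝ) (hs : isBRSeq m lam α q Q s) :
    ∃ sstar : Fin m → ℝ, isNE m lam α q Q sstar ∧
      (∀ s' : Fin m → ℝ, isNE m lam α q Q s' → s' = sstar) ∧
      Tendsto s atTop (nhds sstar) := by
  classical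
  open HomFLAux in
  have hm0 : 0 < m := hm
  have hm' : (0:ℝ) < m := Nat.cast_pos.mpr hm0
  have hαle : ∀ i, αmin ≤ α i := fun i => hαmin.2 ⟨i, rfl⟩
  have hαi : ∀ i, lam < (m : ℝ) * α i := fun i =>
    lt_of_lt_of_le hlam.2 (by have := hαle i; nlinarith)
  have hαi' : ∀ i, lamstar < (m : ℝ) * α i := fun i =>
    lt_of_lt_of_le hlamstar.2 (by have := hαle i; nlinarith)
  have hlam0 : 0 < lam := hlam.1
  have hcc : ∀ i, 0 ≤ cc m lam (α i) := fun i => (cc_pos hlam0 (hαi i)).le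
  set G := GS m lam α q Q with hG
  obtain ⟨w, hwt, hwstep, hwbox⟩ :=
    iter_tendsto G hqQ (fun t i => GS_mem_box hqQ t i) (fun {a b} hab j => GS_mono hcc hab j)
  obtain ⟨w', hw't, hw'step, hw'box⟩ :=
    iter_tendsto_anti G hqQ (fun t i => GS_mem_box hqQ t i) (fun {a b} hab j => GS_mono hcc hab j)
  have hufix : ∀ j, w j = br m lam α q Q w j :=
    limit_fixed (fun k => G^[k] q) w (fun k => Function.iterate_succ_apply' G k q) hwt
  have hu'fix : ∀ j, w' j = br m lam α q Q w' j :=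
    limit_fixed (fun k => G^[k] Q) w' (fun k => Function.iterate_succ_apply' G k Q) hw't
  have hNEw : isNE m lam α q Q w := fixed_isNE hm0 hαi hqQ hufix
  have hNEw' : isNE m lam α q Q w' := fixed_isNE hm0 hαi hqQ hu'fix
  have hR : (∑ i, rr m lam (α i)) ≠ 1 :=
    sum_rr_ne_one hm0 hαi hαi' hα hlam0 hlamstar.1 hlseq hne
  have huniq : ∀ s' : Fin m → ℝ, isNE m lam α q Q s' → s' = w := by
    intro s' h
    rcases le_total (∑ j, s' j) (∑ j, w j) with hle | hle
    · exact NE_unique_ordered hm0 hlam0 hαi hq hqQ hR h hNEw hle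
    · exact (NE_unique_ordered hm0 hlam0 hαi hq hqQ hR hNEw h hle).symm
  have hww' : w' = w := huniq w' hNEw'
  -- the best-response sequence follows the Gauss-Seidel map
  have hseq : ∀ k, s (k + 1) = G (s k) := by
    intro k
    have key : ∀ n : ℕ, ∀ i : Fin m, (i : ℕ) < n → s (k + 1) i = G (s k) i := by
      intro n
      induction n with
      | zero => intro i hi; omega
      | succ n ih =>
        intro i hi
        rcases Nat.lt_or_ge (i : ℕ) n with h' | h'
        · exact ih i h'
        · have hin : (i : ℕ) = n := by omega
          obtain ⟨hmem, hmax⟩ := hs.2 k i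
          have hbu := br_unique hm0 (hαi i) (hqQ i)
            (fun j => if (j : ℕ) < (i : ℕ) then s (k + 1) j else s k j)
            (s (k + 1) i) hmem hmax
          have hmixeq : (fun j : Fin m => if (j : ℕ) < (i : ℕ) then s (k + 1) j else s k j)
              = (fun j : Fin m => if (j : ℕ) < (i : ℕ) then G (s k) j else s k j) := by
            funext j
            split_ifs with hj
            · exact ih j (by omega)
            · rfl
          show s (k + 1) i = GS m lam α q Q (s k) i
          rw [GS_eq_mix, ← hmixeq]
          exact hbu
    funext i
    exact key m i i.isLt
  have hband : ∀ k, ∀ i, G^[k] q i ≤ s (k + 1) i ∧ s (k + 1) i ≤ G^[k] Q i := by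
    intro k
    induction k with
    | zero =>
      intro i
      simpa using ⟨(hs.2 0 i).1.1, (hs.2 0 i).1.2⟩
    | succ k ih =>
      intro i
      rw [hseq (k + 1), Function.iterate_succ_apply', Function.iterate_succ_apply']
      exact ⟨GS_mono hcc (fun j => (ih j).1) i, GS_mono hcc (fun j => (ih j).2) i⟩
  refine ⟨w, hNEw, huniq, ?_⟩
  rw [tendsto_pi_nhds]
  intro i
  have hsq : Tendsto (fun k => s (k + 1) i) atTop (nhds (w i)) := by
    apply tendsto_of_tendsto_of_tendsto_of_le_of_le (hwt i) (hww' ▸ hw't i)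
    · exact fun k => (hband k i).1
    · exact fun k => (hband k i).2
  exact (tendsto_add_atTop_iff_nat 1).mp hsq
end
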